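/- Variation of the Newtonian internal energy (Eq. AdUN): Let E_int(λ) := ∫ ρ(λ) u(λ) dV. Assume: there is a bounded open set V ⊂ ℝ³ whose topological boundary has Lebesgue measure zero such that, for all λ near 0, ρ(λ) > 0 on V and ρ(λ) = 0 and P(λ) = 0 outside V; differentiation under the integral sign at λ = 0 is justified by an integrable dominating bound; on V the local thermodynamic relation Δu = T Δs + (P/ρ²) Δρ holds at λ = 0; and h is a smooth function on ℝ³ with ρ h = ρ u + P everywhere. Then the λ-derivative of E_int at λ = 0 equals ∫ ρ T Δs dV + ∫ h (δρ + ∂_j(ρ ξ^j)) dV + ∫ ξ^i ∂_i P dV. -/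

import Mathlib

noncomputable section
open MeasureTheory Filter Topology Real

abbrev E3 := EuclideanSpace ℝ (Fin 3)

/-- Partial derivative in the `i`-th coordinate direction. -/
noncomputable def pd (i : Fin 3) (f : E3 → ℝ) (x : E3) : ℝ :=
  fderiv ℝ f x (EuclideanSpace.single i 1)

/-- Flat Laplacian on `ℝ³`. -/
noncomputable def lap (f : E3 → ℝ) (x : E3) : ℝ := ∑ i, pd i (fun y => pd i f y) x

/-- Surface integral over the sphere of radius `r` (centered at the origin) of the outward
normal component of the vector field with components `F · i`. -/
noncomputable def flux (F : E3 → Fin 3 → ℝ) (r : ℝ) : ℝ :=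
  r ^ 2 * ∫ ω : Metric.sphere (0 : E3) 1,
      (∑ i, F (r • (ω : E3)) i * (ω : E3) i) ∂((volume : Measure E3).toSphere)

/-- Eulerian variation `δF` (the `λ`-derivative at `λ = 0`) of a family of scalar fields. -/
noncomputable def dl (F : ℝ → E3 → ℝ) (x : E3) : ℝ := deriv (fun l => F l x) 0

/-- Lagrangian variation `ΔF := δF + ξ^j ∂_j F` of a family of scalar fields. -/
noncomputable def lagS (ξ : E3 → Fin 3 → ℝ) (F : ℝ → E3 → ℝ) (x : E3) : ℝ :=
  dl F x + ∑ j, ξ x j * pd j (F 0) x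

/-- Lagrangian variation `Δv_i := δv_i + ξ^j ∂_j v_i + v_j ∂_i ξ^j` of the velocity. -/
noncomputable def lagV (ξ : E3 → Fin 3 → ℝ) (v : ℝ → E3 → Fin 3 → ℝ) (i : Fin 3)
    (x : E3) : ℝ :=
  deriv (fun l => v l x i) 0 + (∑ j, ξ x j * pd j (fun y => v 0 y i) x)
    + ∑ j, v 0 x j * pd i (fun y => ξ y j) x

/-- `δρ + ∂_j(ρ ξ^j)`, the volume density of `Δ(ρ dV)`. -/
noncomputable def massVar (ξ : E3 → Fin 3 → ℝ) (ρ : ℝ → E3 → ℝ) (x : E3) : ℝ :=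
  dl ρ x + ∑ j, pd j (fun y => ρ 0 y * ξ y j) x

/-- The rotational vector field `φ(x) = (−x₂, x₁, 0)`. -/
noncomputable def phiRot (x : E3) : Fin 3 → ℝ := ![-(x 1), x 0, 0]

/- Auxiliary lemmas -/

lemma NIEV.contDiff_slice {F : ℝ → E3 → ℝ} (hF : ContDiff ℝ (⊤ : ℕ∞) fun p : ℝ × E3 => F p.1 p.2) :
    ContDiff ℝ (⊤ : ℕ∞) (F 0) :=
  hF.comp (contDiff_const.prodMk contDiff_id)

lemma NIEV.hasDerivAt_slice {F : ℝ → E3 → ℝ} (hF : ContDiff ℝ (⊤ : ℕ∞) fun p : ℝ × E3 => F p.1 p.2)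
    (x : E3) :
    HasDerivAt (fun l => F l x)
      (fderiv ℝ (fun p : ℝ × E3 => F p.1 p.2) (0, x) (1, 0)) 0 := by
  have h2 : HasDerivAt (fun l : ℝ => ((l, x) : ℝ × E3)) ((1 : ℝ), (0 : E3)) 0 :=
    (hasDerivAt_id (0 : ℝ)).prodMk (hasDerivAt_const 0 x)
  exact ((hF.differentiable (by simp) (0, x)).hasFDerivAt).comp_hasDerivAt 0 h2

lemma NIEV.dl_eq {F : ℝ → E3 → ℝ} (hF : ContDiff ℝ (⊤ : ℕ∞) fun p : ℝ × E3 => F p.1 p.2) (x : E3) :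
    dl F x = fderiv ℝ (fun p : ℝ × E3 => F p.1 p.2) (0, x) (1, 0) :=
  (NIEV.hasDerivAt_slice hF x).deriv

lemma NIEV.hasDerivAt_dl {F : ℝ → E3 → ℝ} (hF : ContDiff ℝ (⊤ : ℕ∞) fun p : ℝ × E3 => F p.1 p.2)
    (x : E3) : HasDerivAt (fun l => F l x) (dl F x) 0 := by
  rw [NIEV.dl_eq hF x]; exact NIEV.hasDerivAt_slice hF x

lemma NIEV.continuous_dl {F : ℝ → E3 → ℝ} (hF : ContDiff ℝ (⊤ : ℕ∞) fun p : ℝ × E3 => F p.1 p.2) :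
    Continuous (dl F) := by
  have : dl F = fun x => fderiv ℝ (fun p : ℝ × E3 => F p.1 p.2) (0, x) (1, 0) :=
    funext (NIEV.dl_eq hF)
  rw [this]
  exact ((hF.continuous_fderiv (by simp)).comp (continuous_const.prodMk continuous_id)).clm_apply
    continuous_const

lemma NIEV.continuous_pd {f : E3 → ℝ} (hf : ContDiff ℝ (⊤ : ℕ∞) f) (i : Fin 3) :
    Continuous (pd i f) :=
  (hf.continuous_fderiv (by simp)).clm_apply continuous_const

lemma NIEV.pd_mul {f g : E3 → ℝ} {x : E3} (hf : DifferentiableAt ℝ f x)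
    (hg : DifferentiableAt ℝ g x) (i : Fin 3) :
    pd i (fun y => f y * g y) x = f x * pd i g x + g x * pd i f x := by
  simp [pd, fderiv_fun_mul hf hg]

lemma NIEV.pd_add {f g : E3 → ℝ} {x : E3} (hf : DifferentiableAt ℝ f x)
    (hg : DifferentiableAt ℝ g x) (i : Fin 3) :
    pd i (fun y => f y + g y) x = pd i f x + pd i g x := by
  simp [pd, fderiv_fun_add hf hg]

lemma NIEV.hasCompactSupport_pd {f : E3 → ℝ} (hK : HasCompactSupport f) (i : Fin 3) :
    HasCompactSupport (pd i f) :=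
  hK.fderiv_apply ℝ (EuclideanSpace.single i 1)

lemma NIEV.integral_pd_eq_zero {f : E3 → ℝ} (hf : ContDiff ℝ (⊤ : ℕ∞) f)
    (hK : HasCompactSupport f) (i : Fin 3) : ∫ x : E3, pd i f x = 0 := by
  have hint : Integrable (fun x : E3 => fderiv ℝ f x (EuclideanSpace.single i 1)) volume :=
    (NIEV.continuous_pd hf i).integrable_of_hasCompactSupport (NIEV.hasCompactSupport_pd hK i)
  have h1 : ∫ x : E3, (1 : ℝ) * fderiv ℝ f x (EuclideanSpace.single i 1)
      = - ∫ x : E3, fderiv ℝ (fun _ : E3 => (1 : ℝ)) x (EuclideanSpace.single i 1) * f x := by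
    apply integral_mul_fderiv_eq_neg_fderiv_mul_of_integrable
    · have : (fun x : E3 =>
          fderiv ℝ (fun _ : E3 => (1 : ℝ)) x (EuclideanSpace.single i 1) * f x)
          = fun _ => 0 := by
        funext x; simp
      rw [this]; exact integrable_zero _ _ _
    · simpa [one_mul] using hint
    · simpa [one_mul] using hf.continuous.integrable_of_hasCompactSupport hK
    · exact fun x _ => differentiableAt_const (1 : ℝ)
    · exact fun x _ => hf.differentiable (by simp) x
  simpa [pd] using h1

/-- Variation of the Newtonian internal energy (Eq. AdUN):
`δ∫ ρu dV = ∫ ρT Δs dV + ∫ h (δρ + ∂_j(ρξ^j)) dV + ∫ ξ^i ∂_i P dV`. -/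
theorem newtonian_internal_energy_variation
    (ρ u s P T : ℝ → E3 → ℝ) (ξ : E3 → Fin 3 → ℝ) (h : E3 → ℝ)
    (hρC : ContDiff ℝ (⊤ : ℕ∞) fun p : ℝ × E3 => ρ p.1 p.2)
    (huC : ContDiff ℝ (⊤ : ℕ∞) fun p : ℝ × E3 => u p.1 p.2)
    (hsC : ContDiff ℝ (⊤ : ℕ∞) fun p : ℝ × E3 => s p.1 p.2)
    (hPC : ContDiff ℝ (⊤ : ℕ∞) fun p : ℝ × E3 => P p.1 p.2)
    (hTC : ContDiff ℝ (⊤ : ℕ∞) fun p : ℝ × E3 => T p.1 p.2)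
    (hξC : ∀ i, ContDiff ℝ (⊤ : ℕ∞) fun x => ξ x i)
    -- V is a bounded open set with Lebesgue-null boundary:
    (V : Set E3) (hVopen : IsOpen V) (hVbd : Bornology.IsBounded V)
    (hVfr : volume (frontier V) = 0)
    -- for all λ near 0, ρ(λ) > 0 on V and ρ(λ) = 0, P(λ) = 0 outside V
    (ε : ℝ) (hε : 0 < ε)
    (hpos : ∀ l : ℝ, |l| < ε → ∀ x ∈ V, 0 < ρ l x)
    (hsupp : ∀ l : ℝ, |l| < ε → ∀ x ∉ V, ρ l x = 0 ∧ P l x = 0)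
    -- differentiation under the integral sign at λ = 0 is justified
    (hDUI : HasDerivAt (fun l => ∫ x : E3, ρ l x * u l x)
      (∫ x : E3, deriv (fun l => ρ l x * u l x) 0) 0)
    -- local thermodynamic relation Δu = T Δs + (P/ρ²) Δρ on V at λ = 0
    (hthermo : ∀ x ∈ V,
      lagS ξ u x = T 0 x * lagS ξ s x + (P 0 x / ρ 0 x ^ 2) * lagS ξ ρ x)
    -- h is smooth with ρ h = ρ u + P everywhere
    (hhC : ContDiff ℝ (⊤ : ℕ∞) h)
    (hh : ∀ x : E3, ρ 0 x * h x = ρ 0 x * u 0 x + P 0 x) :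
    deriv (fun l => ∫ x : E3, ρ l x * u l x) 0
      = (∫ x : E3, ρ 0 x * T 0 x * lagS ξ s x)
        + (∫ x : E3, h x * massVar ξ ρ x)
        + ∫ x : E3, ∑ i, ξ x i * pd i (P 0) x := by
  have hε0 : |(0 : ℝ)| < ε := by simpa using hε
  -- slice smoothness
  have hρ0 : ContDiff ℝ (⊤ : ℕ∞) (ρ 0) := NIEV.contDiff_slice hρC
  have hu0 : ContDiff ℝ (⊤ : ℕ∞) (u 0) := NIEV.contDiff_slice huC
  have hs0 : ContDiff ℝ (⊤ : ℕ∞) (s 0) := NIEV.contDiff_slice hsC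
  have hP0 : ContDiff ℝ (⊤ : ℕ∞) (P 0) := NIEV.contDiff_slice hPC
  have hT0 : ContDiff ℝ (⊤ : ℕ∞) (T 0) := NIEV.contDiff_slice hTC
  have hdρ0 : Differentiable ℝ (ρ 0) := hρ0.differentiable (by simp)
  have hdu0 : Differentiable ℝ (u 0) := hu0.differentiable (by simp)
  have hdP0 : Differentiable ℝ (P 0) := hP0.differentiable (by simp)
  have hdξ : ∀ i, Differentiable ℝ (fun x => ξ x i) := fun i => (hξC i).differentiable (by simp)
  -- compact support set
  have hKc : IsCompact (closure V) := hVbd.isCompact_closure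
  have hKV : ∀ x : E3, x ∉ closure V → x ∉ V := fun x hx hxV => hx (subset_closure hxV)
  -- derivative-in-λ vanishing
  have dlz : ∀ (F : ℝ → E3 → ℝ) (x : E3), (∀ l : ℝ, |l| < ε → F l x = 0) →
      deriv (fun l => F l x) 0 = 0 := by
    intro F x hF
    have hev : (fun l => F l x) =ᶠ[𝓝 (0 : ℝ)] fun _ => (0 : ℝ) := by
      filter_upwards [Metric.ball_mem_nhds (0 : ℝ) hε] with l hl
      exact hF l (by simpa [Real.norm_eq_abs] using mem_ball_zero_iff.1 hl)
    rw [hev.deriv_eq]; simp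
  -- spatial derivative vanishing outside `closure V`
  have pdz : ∀ (f : E3 → ℝ), (∀ y ∉ V, f y = 0) → ∀ x ∉ closure V, ∀ i, pd i f x = 0 := by
    intro f hf x hx i
    have hev : f =ᶠ[𝓝 x] fun _ => (0 : ℝ) := by
      filter_upwards [isClosed_closure.isOpen_compl.mem_nhds hx] with y hy
      exact hf y (hKV y hy)
    rw [pd, hev.fderiv_eq]
    simp
  -- the four integrands
  set f0 : E3 → ℝ := fun x => deriv (fun l => ρ l x * u l x) 0 with hf0def
  set f1 : E3 → ℝ := fun x => ρ 0 x * T 0 x * lagS ξ s x with hf1def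
  set f2 : E3 → ℝ := fun x => h x * massVar ξ ρ x with hf2def
  set f3 : E3 → ℝ := fun x => ∑ i, ξ x i * pd i (P 0) x with hf3def
  set f4 : E3 → ℝ := fun x => ∑ i, pd i (fun y => (ρ 0 y * u 0 y + P 0 y) * ξ y i) x
    with hf4def
  -- continuity
  have cont0 : Continuous f0 := NIEV.continuous_dl (hρC.mul huC)
  have cont1 : Continuous f1 :=
    (hρ0.continuous.mul hT0.continuous).mul
      ((NIEV.continuous_dl hsC).add
        (continuous_finset_sum _ fun j _ => ((hξC j).continuous.mul (NIEV.continuous_pd hs0 j))))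
  have cont2 : Continuous f2 :=
    hhC.continuous.mul
      ((NIEV.continuous_dl hρC).add
        (continuous_finset_sum _ fun j _ => NIEV.continuous_pd (hρ0.mul (hξC j)) j))
  have cont3 : Continuous f3 :=
    continuous_finset_sum _ fun i _ => (hξC i).continuous.mul (NIEV.continuous_pd hP0 i)
  have cont4 : Continuous f4 :=
    continuous_finset_sum _ fun i _ => NIEV.continuous_pd (((hρ0.mul hu0).add hP0).mul (hξC i)) i
  -- vanishing outside `closure V`
  have z0 : ∀ x ∉ closure V, f0 x = 0 := by
    intro x hx
    exact dlz (fun l x => ρ l x * u l x) x fun l hl => by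
      show ρ l x * u l x = 0
      rw [(hsupp l hl x (hKV x hx)).1, zero_mul]
  have z1 : ∀ x ∉ closure V, f1 x = 0 := by
    intro x hx
    simp only [hf1def]
    rw [(hsupp 0 hε0 x (hKV x hx)).1, zero_mul, zero_mul]
  have zmv : ∀ x ∉ closure V, massVar ξ ρ x = 0 := by
    intro x hx
    have h1 : dl ρ x = 0 := dlz ρ x fun l hl => (hsupp l hl x (hKV x hx)).1
    have h2 : ∀ j : Fin 3, pd j (fun y => ρ 0 y * ξ y j) x = 0 := fun j =>
      pdz (fun y => ρ 0 y * ξ y j)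
        (fun y hy => by show ρ 0 y * ξ y j = 0; rw [(hsupp 0 hε0 y hy).1, zero_mul]) x hx j
    simp [massVar, h1, h2]
  have z2 : ∀ x ∉ closure V, f2 x = 0 := by
    intro x hx; simp only [hf2def]; rw [zmv x hx, mul_zero]
  have z3 : ∀ x ∉ closure V, f3 x = 0 := by
    intro x hx
    simp only [hf3def]
    refine Finset.sum_eq_zero fun i _ => ?_
    rw [pdz (P 0) (fun y hy => (hsupp 0 hε0 y hy).2) x hx i, mul_zero]
  have z4 : ∀ x ∉ closure V, f4 x = 0 := by
    intro x hx
    simp only [hf4def]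
    refine Finset.sum_eq_zero fun i _ => ?_
    refine pdz _ (fun y hy => ?_) x hx i
    show (ρ 0 y * u 0 y + P 0 y) * ξ y i = 0
    rw [(hsupp 0 hε0 y hy).1, (hsupp 0 hε0 y hy).2, zero_mul, add_zero, zero_mul]
  -- integrability
  have i1 : Integrable f1 volume :=
    cont1.integrable_of_hasCompactSupport (HasCompactSupport.intro hKc z1)
  have i2 : Integrable f2 volume :=
    cont2.integrable_of_hasCompactSupport (HasCompactSupport.intro hKc z2)
  have i3 : Integrable f3 volume :=
    cont3.integrable_of_hasCompactSupport (HasCompactSupport.intro hKc z3)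
  have i4 : Integrable f4 volume :=
    cont4.integrable_of_hasCompactSupport (HasCompactSupport.intro hKc z4)
  -- pointwise identity away from the boundary
  have hpt : ∀ x ∉ frontier V, f0 x = f1 x + f2 x + f3 x - f4 x := by
    intro x hx
    by_cases hxV : x ∈ V
    · -- main algebraic computation on V
      have ha : ρ 0 x ≠ 0 := (hpos 0 hε0 x hxV).ne'
      have h0 : f0 x = dl ρ x * u 0 x + ρ 0 x * dl u x :=
        ((NIEV.hasDerivAt_dl hρC x).mul (NIEV.hasDerivAt_dl huC x)).deriv
      have em : ∀ j : Fin 3, pd j (fun y => ρ 0 y * ξ y j) x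
          = ρ 0 x * pd j (fun y => ξ y j) x + ξ x j * pd j (ρ 0) x :=
        fun j => NIEV.pd_mul (hdρ0 x) (hdξ j x) j
      have hm : massVar ξ ρ x = dl ρ x + ρ 0 x * (∑ j, pd j (fun y => ξ y j) x)
          + ∑ j, ξ x j * pd j (ρ 0) x := by
        simp only [massVar]
        have : (∑ j, pd j (fun y => ρ 0 y * ξ y j) x)
            = ∑ j : Fin 3, (ρ 0 x * pd j (fun y => ξ y j) x + ξ x j * pd j (ρ 0) x) :=
          Finset.sum_congr rfl fun j _ => em j
        rw [this, Finset.sum_add_distrib, ← Finset.mul_sum]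
        ring
      have e4 : ∀ i : Fin 3, pd i (fun y => (ρ 0 y * u 0 y + P 0 y) * ξ y i) x
          = (ρ 0 x * u 0 x + P 0 x) * pd i (fun y => ξ y i) x
            + (u 0 x * (ξ x i * pd i (ρ 0) x)
            + (ρ 0 x * (ξ x i * pd i (u 0) x)
            + ξ x i * pd i (P 0) x)) := by
        intro i
        have e1 : pd i (fun y => (ρ 0 y * u 0 y + P 0 y) * ξ y i) x
            = (ρ 0 x * u 0 x + P 0 x) * pd i (fun y => ξ y i) x
              + ξ x i * pd i (fun y => ρ 0 y * u 0 y + P 0 y) x :=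
          NIEV.pd_mul (((hdρ0 x).mul (hdu0 x)).add (hdP0 x)) (hdξ i x) i
        have e2 : pd i (fun y => ρ 0 y * u 0 y + P 0 y) x
            = pd i (fun y => ρ 0 y * u 0 y) x + pd i (P 0) x :=
          NIEV.pd_add ((hdρ0 x).mul (hdu0 x)) (hdP0 x) i
        have e3 : pd i (fun y => ρ 0 y * u 0 y) x
            = ρ 0 x * pd i (u 0) x + u 0 x * pd i (ρ 0) x :=
          NIEV.pd_mul (hdρ0 x) (hdu0 x) i
        rw [e1, e2, e3]; ring
      have h4 : f4 x = (ρ 0 x * u 0 x + P 0 x) * (∑ i, pd i (fun y => ξ y i) x)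
          + (u 0 x * (∑ i, ξ x i * pd i (ρ 0) x)
          + (ρ 0 x * (∑ i, ξ x i * pd i (u 0) x)
          + ∑ i, ξ x i * pd i (P 0) x)) := by
        simp only [hf4def]
        have : (∑ i, pd i (fun y => (ρ 0 y * u 0 y + P 0 y) * ξ y i) x)
            = ∑ i : Fin 3, ((ρ 0 x * u 0 x + P 0 x) * pd i (fun y => ξ y i) x
              + (u 0 x * (ξ x i * pd i (ρ 0) x)
              + (ρ 0 x * (ξ x i * pd i (u 0) x)
              + ξ x i * pd i (P 0) x))) :=
          Finset.sum_congr rfl fun i _ => e4 i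
        rw [this]
        simp only [Finset.sum_add_distrib, ← Finset.mul_sum]
      have hth := hthermo x hxV
      simp only [lagS] at hth
      have hth2 : ρ 0 x ^ 2 * (dl u x + ∑ j, ξ x j * pd j (u 0) x)
          = ρ 0 x ^ 2 * (T 0 x * (dl s x + ∑ j, ξ x j * pd j (s 0) x))
            + P 0 x * (dl ρ x + ∑ j, ξ x j * pd j (ρ 0) x) := by
        rw [hth]; field_simp
      simp only [hf1def, hf2def, hf3def]
      rw [h0, hm, h4]
      simp only [lagS]
      refine mul_left_cancel₀ ha ?_
      linear_combination hth2
        - (dl ρ x + (∑ j, ξ x j * pd j (ρ 0) x)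
            + ρ 0 x * ∑ j, pd j (fun y => ξ y j) x) * hh x
    · -- outside the closure: everything vanishes
      have hxK : x ∉ closure V := by
        intro hK'
        exact hx (by rw [hVopen.frontier_eq]; exact ⟨hK', hxV⟩)
      rw [z0 x hxK, z1 x hxK, z2 x hxK, z3 x hxK, z4 x hxK]
      ring
  have hae : f0 =ᵐ[volume] fun x => f1 x + f2 x + f3 x - f4 x := by
    have h0 : ∀ᵐ x : E3, x ∉ frontier V := by
      rw [MeasureTheory.ae_iff]
      have : {a : E3 | ¬ a ∉ frontier V} = frontier V := by simp
      rw [this]; exact hVfr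
    filter_upwards [h0] with x hx using hpt x hx
  -- the divergence integral vanishes
  have hi4z : ∫ x : E3, f4 x = 0 := by
    have hwC : ∀ i : Fin 3, ContDiff ℝ (⊤ : ℕ∞) (fun y => (ρ 0 y * u 0 y + P 0 y) * ξ y i) :=
      fun i => ((hρ0.mul hu0).add hP0).mul (hξC i)
    have hwK : ∀ i : Fin 3, HasCompactSupport (fun y => (ρ 0 y * u 0 y + P 0 y) * ξ y i) := by
      intro i
      refine HasCompactSupport.intro hKc fun y hy => ?_
      show (ρ 0 y * u 0 y + P 0 y) * ξ y i = 0
      rw [(hsupp 0 hε0 y (hKV y hy)).1, (hsupp 0 hε0 y (hKV y hy)).2, zero_mul, add_zero,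
        zero_mul]
    simp only [hf4def]
    rw [MeasureTheory.integral_finset_sum _ fun i _ =>
      (NIEV.continuous_pd (hwC i) i).integrable_of_hasCompactSupport
        (NIEV.hasCompactSupport_pd (hwK i) i)]
    exact Finset.sum_eq_zero fun i _ => NIEV.integral_pd_eq_zero (hwC i) (hwK i) i
  rw [hDUI.deriv]
  calc ∫ x : E3, deriv (fun l => ρ l x * u l x) 0
      = ∫ x : E3, (f1 x + f2 x + f3 x - f4 x) := integral_congr_ae hae
    _ = ((∫ x : E3, f1 x) + ∫ x : E3, f2 x) + (∫ x : E3, f3 x) - ∫ x : E3, f4 x := by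
        have i12 : Integrable (fun x => f1 x + f2 x) volume := i1.add i2
        have i123 : Integrable (fun x => f1 x + f2 x + f3 x) volume := i12.add i3
        rw [integral_sub i123 i4, integral_add i12 i3, integral_add i1 i2]
    _ = (∫ x : E3, f1 x) + (∫ x : E3, f2 x) + ∫ x : E3, f3 x := by rw [hi4z, sub_zero]
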